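/- There exists a constant c > 0 such that the following holds for the (1+1) EA with one-bit prior noise probability p ≤ 1/2 on LeadingOnes: for every n and every current search point x with LO(x) = i ≥ 4, the probability that the current search point after one generation has LeadingOnes value strictly less than i/2 is at least c·p·i²/n². In particular this probability is Ω(p) when i = Ω(n). -/

import Mathlib

open Finset ENNReal

/-- A search point: a bit string of length `n`. -/
abbrev Point (n : ℕ) := Fin n → Bool

/-- The LeadingOnes fitness: the length of the longest all-ones prefix. -/
def LO {n : ℕ} (x : Point n) : ℕ :=
  (Finset.univ.filter fun i : Fin n => ∀ j : Fin n, j ≤ i → x j = true).card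

/-- The all-ones string, the unique global optimum of LeadingOnes. -/
def allOnes (n : ℕ) : Point n := fun _ => true

/-- Probability that standard bit mutation (flip each bit independently with
probability `1/n`) turns `x` into `y`. -/
noncomputable def mutProb (n : ℕ) (x y : Point n) : ℝ :=
  (1 / n) ^ hammingDist x y * (1 - 1 / n) ^ (n - hammingDist x y)

/-- Probability that one-bit prior noise with probability `p` turns `x` into `u`:
with probability `1 - p` no noise occurs, otherwise one uniformly random bit flips. -/
noncomputable def oneBitNoise (n : ℕ) (p : ℝ) (x u : Point n) : ℝ :=
  (if u = x then 1 - p else 0) + (if hammingDist x u = 1 then p / n else 0)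

/-- Probability that offspring `y` is accepted against parent `x`, i.e. that the
noisy fitness of `y` is at least the noisy fitness of `x` (noise applied
independently to parent and offspring). -/
noncomputable def accProb (n : ℕ) (noise : Point n → Point n → ℝ)
    (f : Point n → ℝ) (x y : Point n) : ℝ :=
  ∑ u : Point n, ∑ v : Point n,
    noise x u * noise y v * (if f u ≤ f v then 1 else 0)

/-- One-generation transition probability of a (1+1)-type algorithm with mutation
kernel `mutK`, prior-noise kernel `noise` and fitness `f`: mutation creates an
offspring, which replaces the parent iff its noisy fitness is at least the
parent's noisy fitness. -/
noncomputable def step (n : ℕ) (mutK noise : Point n → Point n → ℝ)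
    (f : Point n → ℝ) (x z : Point n) : ℝ :=
  mutK x z * accProb n noise f x z
    + (if z = x then ∑ y : Point n, mutK x y * (1 - accProb n noise f x y) else 0)

/-- One-generation transition probability of the (1+1) EA with one-bit prior
noise probability `p` on LeadingOnes. -/
noncomputable def stepEA (n : ℕ) (p : ℝ) : Point n → Point n → ℝ :=
  step n (mutProb n) (oneBitNoise n p) fun x => (LO x : ℝ)

/-- Probability that a Markov chain with transition matrix `P` started in `x`
does not visit `opt` within the first `t` generations (time `0` included). -/
noncomputable def survive (n : ℕ) (P : Point n → Point n → ℝ) (opt : Point n) :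
    ℕ → Point n → ℝ
  | 0, x => if x = opt then 0 else 1
  | t + 1, x => if x = opt then 0 else ∑ y : Point n, P x y * survive n P opt t y

/-- Expected optimisation time, measured in fitness evaluations
(`evalsPerGen` evaluations per generation), of a Markov chain with transition
matrix `P` started from a uniformly random search point, until it first hits
`opt`; computed as `evalsPerGen · Σ_t P(T > t)`. -/
noncomputable def expectedTime (n : ℕ) (P : Point n → Point n → ℝ)
    (opt : Point n) (evalsPerGen : ℕ) : ℝ≥0∞ :=
  (evalsPerGen : ℝ≥0∞) * ∑' t : ℕ, ENNReal.ofReal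
    ((Fintype.card (Point n) : ℝ)⁻¹ * ∑ x : Point n, survive n P opt t x)

/-- Expected optimisation time (number of fitness evaluations, two per
generation) of the (1+1) EA with one-bit prior noise probability `p` on
LeadingOnes with problem size `n`, from a uniformly random initial search point. -/
noncomputable def EAtime (n : ℕ) (p : ℝ) : ℝ≥0∞ :=
  expectedTime n (stepEA n p) (allOnes n) 2

/-!
Fix `i = LO x` and, for each `j < ⌈i/2⌉`, let `z_j` be `x` with its `j`-th bit cleared, so
`LO z_j = j < i/2`. Standard bit mutation produces `z_j` with probability at least `1/(4n)`.
The offspring `z_j` is accepted whenever the noise leaves it unchanged (probability `1 - p ≥ 1/2`)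
while the noise clears one of the first `j + 1` bits of the parent (probability `(j + 1) p / n`).
Summing `(j + 1) p / (8 n²)` over `j < ⌈i/2⌉` gives at least `p i² / (64 n²)`.
-/

open Function

section LeadingOnes

variable {n : ℕ}

lemma LO_le (x : Point n) : LO x ≤ n := by
  unfold LO
  exact (card_filter_le _ _).trans_eq (card_fin n)

lemma LO_le_of_eq_false {x : Point n} {j : Fin n} (hj : x j = false) : LO x ≤ j := by
  refine (card_le_card fun k hk => ?_).trans_eq (Fin.card_Iio j)
  simp only [mem_filter, mem_univ, true_and] at hk
  exact mem_Iio.2 (lt_of_not_ge fun hjk => by simpa [hj] using hk j hjk)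

lemma eq_true_of_lt_LO {x : Point n} {j : Fin n} (hj : (j : ℕ) < LO x) : x j = true := by
  by_contra hx
  exact (LO_le_of_eq_false (Bool.eq_false_iff.2 hx)).not_gt hj

lemma LO_update_false {x : Point n} {j : Fin n} (hj : (j : ℕ) < LO x) :
    LO (update x j false) = j := by
  rw [LO, ← Fin.card_Iio j]
  congr 1
  ext k
  simp only [mem_filter, mem_univ, true_and, mem_Iio]
  constructor
  · intro hk
    exact lt_of_not_ge fun hjk => by simpa using hk j hjk
  · intro hk l hlk
    rw [update_of_ne (hlk.trans_lt hk).ne]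
    exact eq_true_of_lt_LO (by have := Fin.le_def.1 hlk; have := Fin.lt_def.1 hk; omega)

lemma LO_update_false_lt_half {x : Point n} {j : Fin n} (hj : 2 * (j : ℕ) < LO x) :
    (LO (update x j false) : ℝ) < LO x / 2 := by
  rw [LO_update_false (by omega), lt_div_iff₀ two_pos]
  exact_mod_cast (by omega : (j : ℕ) * 2 < LO x)

lemma update_false_injOn (x : Point n) : Set.InjOn (update x · false) {k | x k = true} := by
  intro k hk k' _ hkk'
  by_contra hne
  simpa [update_of_ne hne, show x k = true from hk] using congrFun hkk' k

end LeadingOnes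

lemma hammingDist_update_of_ne {ι : Type*} {β : ι → Type*} [Fintype ι] [DecidableEq ι]
    [∀ i, DecidableEq (β i)] (x : ∀ i, β i) {i : ι} {b : β i} (h : x i ≠ b) :
    hammingDist x (update x i b) = 1 := by
  rw [hammingDist, card_eq_one]
  refine ⟨i, eq_singleton_iff_unique_mem.2 ⟨by simpa using h, fun k hk => ?_⟩⟩
  by_contra hki
  simp [update_of_ne hki] at hk

section Noise

variable {n : ℕ} {p : ℝ}

lemma oneBitNoise_nonneg (hp0 : 0 ≤ p) (hp1 : p ≤ 1) (x u : Point n) :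
    0 ≤ oneBitNoise n p x u := by
  unfold oneBitNoise
  have : 0 ≤ p / n := by positivity
  split_ifs <;> linarith

lemma oneBitNoise_self (x : Point n) : oneBitNoise n p x x = 1 - p := by
  simp [oneBitNoise]

lemma oneBitNoise_update {x : Point n} {j : Fin n} {b : Bool} (h : x j ≠ b) :
    oneBitNoise n p x (update x j b) = p / n := by
  have hne : update x j b ≠ x := fun he => h (by simpa using (congrFun he j).symm)
  simp [oneBitNoise, hammingDist_update_of_ne x h, hne]

end Noise

section Mutation

lemma inv_exp_one_le_one_sub_inv_pow (m : ℕ) :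
    (Real.exp 1)⁻¹ ≤ (1 - 1 / ((m : ℝ) + 1)) ^ m := by
  rcases m.eq_zero_or_pos with rfl | hm
  · simpa using inv_le_one_of_one_le₀ (Real.one_le_exp zero_le_one)
  have hbase : 1 - 1 / ((m : ℝ) + 1) = (1 + (m : ℝ)⁻¹)⁻¹ := by
    field_simp
    ring
  rw [hbase, inv_pow]
  exact inv_anti₀ (by positivity) Real.one_add_inv_pow_le_exp

variable {n : ℕ}

lemma mutProb_nonneg (x y : Point n) : 0 ≤ mutProb n x y := by
  have : 0 ≤ 1 - (1 : ℝ) / n := sub_nonneg.2 (by simpa using Nat.cast_inv_le_one (α := ℝ) n)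
  unfold mutProb
  positivity

lemma one_div_four_mul_le_mutProb {x y : Point n} (hxy : hammingDist x y = 1) :
    1 / (4 * n) ≤ mutProb n x y := by
  obtain ⟨m, rfl⟩ : ∃ m, n = m + 1 :=
    Nat.exists_eq_add_one.2
      (by simpa [hxy] using hammingDist_le_card_fintype (x := x) (y := y) : 1 ≤ n)
  have hquarter : (1 : ℝ) / 4 ≤ (Real.exp 1)⁻¹ := by
    rw [one_div]
    exact inv_anti₀ (Real.exp_pos 1) (by linarith [Real.exp_one_lt_d9])
  calc 1 / (4 * ((m + 1 : ℕ) : ℝ)) = 1 / ((m : ℝ) + 1) * (1 / 4) := by push_cast; field_simp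
    _ ≤ 1 / ((m : ℝ) + 1) * (1 - 1 / ((m : ℝ) + 1)) ^ m := by
      gcongr
      exact hquarter.trans (inv_exp_one_le_one_sub_inv_pow m)
    _ = mutProb (m + 1) x y := by simp [mutProb, hxy]

end Mutation

section Acceptance

variable {n : ℕ} {noise : Point n → Point n → ℝ} {f : Point n → ℝ}

lemma accProb_term_nonneg (hnoise : ∀ a b, 0 ≤ noise a b) (x y u v : Point n) :
    0 ≤ noise x u * noise y v * (if f u ≤ f v then 1 else 0) := by
  have : (0 : ℝ) ≤ if f u ≤ f v then 1 else 0 := by split_ifs <;> norm_num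
  exact mul_nonneg (mul_nonneg (hnoise x u) (hnoise y v)) this

lemma accProb_nonneg (hnoise : ∀ a b, 0 ≤ noise a b) (x y : Point n) :
    0 ≤ accProb n noise f x y :=
  sum_nonneg fun u _ => sum_nonneg fun v _ => accProb_term_nonneg hnoise x y u v

lemma sum_mul_le_accProb (hnoise : ∀ a b, 0 ≤ noise a b) {x y v : Point n}
    {S : Finset (Point n)} (hS : ∀ u ∈ S, f u ≤ f v) :
    (∑ u ∈ S, noise x u) * noise y v ≤ accProb n noise f x y := by
  have hterm := accProb_term_nonneg (f := f) hnoise x y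
  calc (∑ u ∈ S, noise x u) * noise y v
      = ∑ u ∈ S, noise x u * noise y v * (if f u ≤ f v then 1 else 0) := by
        rw [sum_mul]
        exact sum_congr rfl fun u hu => by rw [if_pos (hS u hu), mul_one]
    _ ≤ ∑ u ∈ S, ∑ w, noise x u * noise y w * (if f u ≤ f w then 1 else 0) :=
        sum_le_sum fun u _ => single_le_sum (fun w _ => hterm u w) (mem_univ v)
    _ ≤ accProb n noise f x y :=
        sum_le_sum_of_subset_of_nonneg (subset_univ S) fun u _ _ =>
          sum_nonneg fun w _ => hterm u w

lemma step_of_ne {mutK : Point n → Point n → ℝ} {x z : Point n} (hzx : z ≠ x) :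
    step n mutK noise f x z = mutK x z * accProb n noise f x z := by
  rw [step, if_neg hzx, add_zero]

end Acceptance

section DropStep

variable {n : ℕ} {p : ℝ}

lemma stepEA_nonneg_of_ne (hp0 : 0 ≤ p) (hp1 : p ≤ 1) {x z : Point n} (hzx : z ≠ x) :
    0 ≤ stepEA n p x z := by
  rw [stepEA, step_of_ne hzx]
  exact mul_nonneg (mutProb_nonneg x z) (accProb_nonneg (oneBitNoise_nonneg hp0 hp1) x z)

/-- The parent's noise may clear any of its first `j + 1` bits, and none of these noisy parents
beats the noiseless offspring. -/
lemma le_accProb_update_false (hp0 : 0 ≤ p) (hp1 : p ≤ 1) {x : Point n} {j : Fin n}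
    (hj : (j : ℕ) < LO x) :
    ((j : ℝ) + 1) * (p / n) * (1 - p)
      ≤ accProb n (oneBitNoise n p) (fun y => (LO y : ℝ)) x (update x j false) := by
  have hprefix : ∀ k ∈ Iic j, (k : ℕ) < LO x := fun k hk =>
    (Fin.le_def.1 (mem_Iic.1 hk)).trans_lt hj
  have hinj : Set.InjOn (update x · false) (Iic j : Finset (Fin n)) := fun k hk k' hk' =>
    update_false_injOn x (eq_true_of_lt_LO (hprefix k hk)) (eq_true_of_lt_LO (hprefix k' hk'))
  have hnoise : ∑ u ∈ (Iic j).image (update x · false), oneBitNoise n p x u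
      = ((j : ℝ) + 1) * (p / n) := by
    rw [sum_image hinj, sum_congr rfl fun k hk =>
      oneBitNoise_update (by simp [eq_true_of_lt_LO (hprefix k hk)]), sum_const, Fin.card_Iic,
      nsmul_eq_mul]
    push_cast
    ring
  rw [← hnoise, ← oneBitNoise_self (update x j false)]
  refine sum_mul_le_accProb (oneBitNoise_nonneg hp0 hp1) fun u hu => ?_
  obtain ⟨k, hk, rfl⟩ := mem_image.1 hu
  rw [LO_update_false (hprefix k hk), LO_update_false hj]
  exact_mod_cast mem_Iic.1 hk

lemma le_stepEA_update_false (hp0 : 0 ≤ p) (hp : p ≤ 1 / 2) {x : Point n} {j : Fin n}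
    (hj : (j : ℕ) < LO x) :
    p / (8 * n ^ 2) * ((j : ℝ) + 1) ≤ stepEA n p x (update x j false) := by
  have hxj := eq_true_of_lt_LO hj
  have hne : update x j false ≠ x := fun he => by simpa [hxj] using congrFun he j
  have hmut := one_div_four_mul_le_mutProb
    (hammingDist_update_of_ne x (i := j) (b := false) (by simp [hxj]))
  have hacc := le_accProb_update_false hp0 (by linarith) hj
  rw [stepEA, step_of_ne hne]
  calc p / (8 * n ^ 2) * ((j : ℝ) + 1) = 1 / (4 * n) * (((j : ℝ) + 1) * (p / n) * (1 / 2)) := by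
        field_simp
        ring
    _ ≤ mutProb n x (update x j false) * (((j : ℝ) + 1) * (p / n) * (1 - p)) := by
        gcongr
        · exact (by positivity : (0 : ℝ) ≤ 1 / (4 * n)).trans hmut
        · linarith
    _ ≤ _ := mul_le_mul_of_nonneg_left hacc (mutProb_nonneg x _)

end DropStep

lemma sq_div_eight_le_sum_filter_two_mul_lt {n i : ℕ} (hi : i ≤ n) :
    (i : ℝ) ^ 2 / 8 ≤ ∑ j ∈ univ.filter fun j : Fin n => 2 * (j : ℕ) < i, ((j : ℝ) + 1) := by
  have gauss : ∀ m : ℕ, ∑ k ∈ range m, ((k : ℝ) + 1) = m * (m + 1) / 2 := by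
    intro m
    induction m with
    | zero => simp
    | succ m ih => rw [sum_range_succ, ih]; push_cast; ring
  have hfilter : (range n).filter (fun k => 2 * k < i) = range ((i + 1) / 2) := by
    ext k
    simp only [mem_filter, mem_range]
    omega
  rw [sum_filter, Fin.sum_univ_eq_sum_range (fun k => if 2 * k < i then (k : ℝ) + 1 else 0),
    ← sum_filter, hfilter, gauss]
  have : (i : ℝ) ≤ 2 * (((i + 1) / 2 : ℕ) : ℝ) := by
    exact_mod_cast (by omega : i ≤ 2 * ((i + 1) / 2))
  nlinarith

/-- **Lemma (probability of a large drop in fitness).**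
There exists a constant `c > 0` such that for the (1+1) EA with one-bit prior
noise probability `p ≤ 1/2` on LeadingOnes: for every `n` and every current
search point `x` with `LO(x) = i ≥ 4`, the probability that the next current
search point has LeadingOnes value strictly less than `i/2` is at least
`c · p · i² / n²`. -/
theorem EA_LeadingOnes_drop_in_fitness :
    ∃ c : ℝ, 0 < c ∧
      ∀ n : ℕ, ∀ p : ℝ, 0 ≤ p → p ≤ 1 / 2 → ∀ x : Point n, 4 ≤ LO x →
        c * p * (LO x : ℝ) ^ 2 / n ^ 2
          ≤ ∑ z ∈ Finset.univ.filter
              (fun z : Point n => (LO z : ℝ) < (LO x : ℝ) / 2),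
            stepEA n p x z := by
  refine ⟨1 / 64, by norm_num, fun n p hp0 hp x _ => ?_⟩
  set i := LO x
  set J := univ.filter fun j : Fin n => 2 * (j : ℕ) < i
  have hJ : ∀ j ∈ J, (j : ℕ) < i := fun j hj => by have := (mem_filter.1 hj).2; omega
  have himage : J.image (update x · false) ⊆ univ.filter fun z => (LO z : ℝ) < i / 2 := by
    intro z hz
    obtain ⟨j, hj, rfl⟩ := mem_image.1 hz
    exact mem_filter.2 ⟨mem_univ _, LO_update_false_lt_half (mem_filter.1 hj).2⟩
  calc 1 / 64 * p * (i : ℝ) ^ 2 / n ^ 2 = p / (8 * n ^ 2) * ((i : ℝ) ^ 2 / 8) := by ring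
    _ ≤ p / (8 * n ^ 2) * ∑ j ∈ J, ((j : ℝ) + 1) := by
        gcongr
        exact sq_div_eight_le_sum_filter_two_mul_lt (LO_le x)
    _ ≤ ∑ j ∈ J, stepEA n p x (update x j false) := by
        rw [mul_sum]
        exact sum_le_sum fun j hj => le_stepEA_update_false hp0 hp (hJ j hj)
    _ = ∑ z ∈ J.image (update x · false), stepEA n p x z :=
        (sum_image fun j hj j' hj' =>
          update_false_injOn x (eq_true_of_lt_LO (hJ j hj)) (eq_true_of_lt_LO (hJ j' hj'))).symm
    _ ≤ _ := sum_le_sum_of_subset_of_nonneg himage fun z hz _ => by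
        refine stepEA_nonneg_of_ne hp0 (by linarith) fun hzx => ?_
        have hlt := (mem_filter.1 hz).2
        rw [hzx] at hlt
        linarith [(Nat.cast_nonneg i : (0 : ℝ) ≤ i)]
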